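/- arXiv:2102.02785 — 3 statements merged into one kernel-verified Lean document; each statement's English description precedes it below -/
import Mathlib

section
/- The MaxHam rule, which maps a profile P to argmin over J in J(Φ) of max_i H(J_i, J), satisfies participation: no agent can, by abstaining, obtain an outcome set strictly preferred to the outcome when she participates truthfully, for any preference extension satisfying the standard consistency conditions. -/
def maxDist {m n : ℕ} (P : Fin n → Fin m → Bool) (J : Fin m → Bool) : ℕ :=
  Finset.univ.sup fun i => hammingDist (P i) J

/-- The MaxHam rule: the admissible judgments minimizing the maximum Hamming
distance to the profile's judgments. -/
def maxHam {m n : ℕ} (D : Finset (Fin m → Bool)) (P : Fin n → Fin m → Bool) :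
    Finset (Fin m → Bool) :=
  D.filter fun J => ∀ K ∈ D, maxDist P J ≤ maxDist P K

/- If abstaining gave agent `i` an outcome `J'` strictly closer to her than some `J` chosen when she
votes, then `J'` beats `J` on her distance while `J` is at least as good as `J'` on the maximum over
everyone, so the maximum at `J'` is attained by the other agents. Hence `J'` is optimal with and
without `i`, and so is `J`: the pair cannot witness a strict set preference. -/

theorem isMinOn_exchange_of_max {α β : Type*} [LinearOrder β] {f g : α → β} {s : Set α} {a b : α}
    (ha : IsMinOn (fun x => max (f x) (g x)) s a) (hb : IsMinOn g s b) (hbs : b ∈ s)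
    (hlt : f b < f a) :
    IsMinOn (fun x => max (f x) (g x)) s b ∧ IsMinOn g s a := by
  have hab : max (f a) (g a) ≤ max (f b) (g b) := ha hbs
  have hfb : f b < max (f b) (g b) := hlt.trans_le ((le_max_left _ _).trans hab)
  have hgb : max (f b) (g b) = g b :=
    max_eq_right ((lt_max_iff.1 hfb).resolve_left (lt_irrefl _)).le
  constructor
  · intro x hx
    calc max (f b) (g b) = g b := hgb
      _ ≤ g x := hb hx
      _ ≤ max (f x) (g x) := le_max_right _ _
  · intro x hx
    calc g a ≤ max (f a) (g a) := le_max_right _ _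
      _ ≤ max (f b) (g b) := hab
      _ = g b := hgb
      _ ≤ g x := hb hx

theorem mem_maxHam_iff {m n : ℕ} {D : Finset (Fin m → Bool)} {P : Fin n → Fin m → Bool}
    {J : Fin m → Bool} : J ∈ maxHam D P ↔ J ∈ D ∧ IsMinOn (maxDist P) (D : Set _) J := by
  simp only [maxHam, Finset.mem_filter, isMinOn_iff, Finset.mem_coe]

theorem maxDist_eq_max_succAbove {m n : ℕ} (P : Fin (n + 1) → Fin m → Bool) (i : Fin (n + 1)) :
    maxDist P = fun J => max (hammingDist (P i) J) (maxDist (fun k => P (i.succAbove k)) J) := by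
  funext J
  rw [maxDist, maxDist, Fin.univ_succAbove n i, Finset.sup_cons, Finset.sup_map]
  rfl

theorem maxHam_participation_general (m n : ℕ) (D : Finset (Fin m → Bool))
    (P : Fin (n + 1) → Fin m → Bool) (i : Fin (n + 1)) :
    ¬ ∃ J' ∈ maxHam D (fun k : Fin n => P (i.succAbove k)), ∃ J ∈ maxHam D P,
        hammingDist (P i) J' < hammingDist (P i) J ∧
        ¬ (J ∈ maxHam D (fun k : Fin n => P (i.succAbove k)) ∩ maxHam D P ∧
           J' ∈ maxHam D (fun k : Fin n => P (i.succAbove k)) ∩ maxHam D P) := by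
  rintro ⟨J', hJ', J, hJ, hlt, hnot⟩
  apply hnot
  simp only [Finset.mem_inter, mem_maxHam_iff, maxDist_eq_max_succAbove P i] at hJ hJ' ⊢
  obtain ⟨hJ'min, hJmin⟩ := isMinOn_exchange_of_max hJ.2 hJ'.2 hJ'.1 hlt
  exact ⟨⟨⟨hJ.1, hJmin⟩, hJ⟩, ⟨hJ', hJ'.1, hJ'min⟩⟩

/-- MaxHam satisfies participation: for any preference extension satisfying the
standard consistency conditions, no agent gets a strictly preferred outcome set by
abstaining.  Since a strict set preference `X ≻̊ Y` implies the existence of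
`J ∈ X`, `J' ∈ Y` with `J ≻_i J'` and not both in `X ∩ Y`, it suffices that no
such witnessing pair exists. -/
theorem maxHam_participation (m n : ℕ) (D : Finset (Fin m → Bool))
    (P : Fin (n + 1) → Fin m → Bool) (i : Fin (n + 1)) (hP : ∀ k, P k ∈ D) :
    ¬ ∃ J' ∈ maxHam D (fun k : Fin n => P (i.succAbove k)), ∃ J ∈ maxHam D P,
        hammingDist (P i) J' < hammingDist (P i) J ∧
        ¬ (J ∈ maxHam D (fun k : Fin n => P (i.succAbove k)) ∩ maxHam D P ∧
           J' ∈ maxHam D (fun k : Fin n => P (i.succAbove k)) ∩ maxHam D P) :=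
  maxHam_participation_general m n D P i
end

section
/- The MaxHam rule satisfies antipodal strategyproofness: no agent can, by submitting the componentwise complement of her truthful judgment, obtain an outcome set strictly preferred to the truthful outcome, for any preference extension satisfying the standard consistency conditions. -/
/-! Write `d K` for the distance from agent `i`'s truthful judgment to `K`; the antipodal report
is at distance `m - d K`, and the other agents are unchanged. Let `J'` win after the manipulation
and `J` win truthfully with `d J' < d J`. If the manipulation does not raise the maximal distance
at `J`, then `d J' < d J ≤ maxDist P J ≤ maxDist P J'`, so the truthful maximum at `J'` is
attained by another agent and is at most `maxDist P' J'`; the chain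
`maxDist P J ≤ maxDist P J' ≤ maxDist P' J' ≤ maxDist P' J ≤ maxDist P J` collapses, and both
`J` and `J'` win under both profiles. Otherwise `maxDist P' J = m - d J`, and minimality of `J'`
gives `m - d J' ≤ m - d J`, contradicting `d J' < d J`. -/

theorem hammingDist_not_add_hammingDist {ι : Type*} [Fintype ι] (x y : ι → Bool) :
    hammingDist (fun t => !x t) y + hammingDist x y = Fintype.card ι := by
  have hnot : hammingDist (fun t => !x t) y = ({t | ¬ x t ≠ y t} : Finset ι).card := by
    simp [hammingDist]
  rw [hnot, hammingDist, add_comm, Finset.card_filter_add_card_filter_not, Finset.card_univ]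

section maxDist

variable {m n : ℕ}

theorem hammingDist_le_maxDist (P : Fin n → Fin m → Bool) (i : Fin n) (J : Fin m → Bool) :
    hammingDist (P i) J ≤ maxDist P J :=
  Finset.le_sup (f := fun k => hammingDist (P k) J) (Finset.mem_univ i)

theorem maxDist_update_le (P : Fin n → Fin m → Bool) (i : Fin n) (x J : Fin m → Bool) :
    maxDist (Function.update P i x) J ≤ max (maxDist P J) (hammingDist x J) := by
  refine Finset.sup_le fun k _ => ?_
  rcases eq_or_ne k i with rfl | hk
  · simp
  · rw [Function.update_of_ne hk]
    exact le_max_of_le_left (hammingDist_le_maxDist P k J)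

theorem mem_maxHam {D : Finset (Fin m → Bool)} {P : Fin n → Fin m → Bool}
    {J : Fin m → Bool} :
    J ∈ maxHam D P ↔ J ∈ D ∧ ∀ K ∈ D, maxDist P J ≤ maxDist P K :=
  Finset.mem_filter

theorem mem_maxHam_of_maxDist_le {D : Finset (Fin m → Bool)} {P : Fin n → Fin m → Bool}
    {J J₀ : Fin m → Bool} (hJ : J ∈ D) (hJ₀ : J₀ ∈ maxHam D P)
    (hle : maxDist P J ≤ maxDist P J₀) : J ∈ maxHam D P :=
  mem_maxHam.2 ⟨hJ, fun K hK => hle.trans (mem_maxHam.1 hJ₀ |>.2 K hK)⟩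

end maxDist

theorem maxHam_antipodal_strategyproof_general (m n : ℕ) (D : Finset (Fin m → Bool))
    (P : Fin n → Fin m → Bool) (i : Fin n) :
    ¬ ∃ J' ∈ maxHam D (Function.update P i (fun t => !(P i t))), ∃ J ∈ maxHam D P,
        hammingDist (P i) J' < hammingDist (P i) J ∧
        ¬ (J ∈ maxHam D (Function.update P i (fun t => !(P i t))) ∩ maxHam D P ∧
           J' ∈ maxHam D (Function.update P i (fun t => !(P i t))) ∩ maxHam D P) := by
  set P' := Function.update P i (fun t => !(P i t))
  rintro ⟨J', hJ', J, hJ, hlt, hnot⟩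
  have hJ_le : maxDist P J ≤ maxDist P J' := (mem_maxHam.1 hJ).2 J' (mem_maxHam.1 hJ').1
  have hJ'_le : maxDist P' J' ≤ maxDist P' J := (mem_maxHam.1 hJ').2 J (mem_maxHam.1 hJ).1
  by_cases hraise : maxDist P' J ≤ maxDist P J
  · -- Reverting `i`'s report in `P'` gives back `P`.
    have hback : maxDist P J' ≤ max (maxDist P' J') (hammingDist (P i) J') := by
      simpa [P'] using maxDist_update_le P' i (P i) J'
    have hd := hammingDist_le_maxDist P i J
    have hJ'_P : maxDist P J' ≤ maxDist P' J' := by omega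
    refine hnot ⟨Finset.mem_inter.2 ⟨?_, hJ⟩, Finset.mem_inter.2 ⟨hJ', ?_⟩⟩
    · exact mem_maxHam_of_maxDist_le (mem_maxHam.1 hJ).1 hJ' (by omega)
    · exact mem_maxHam_of_maxDist_le (mem_maxHam.1 hJ').1 hJ (by omega)
  · have hJ_P' : maxDist P' J ≤ max (maxDist P J) (hammingDist (fun t => !(P i t)) J) :=
      maxDist_update_le P i _ J
    have hanti_le : hammingDist (fun t => !(P i t)) J' ≤ maxDist P' J' := by
      simpa [P'] using hammingDist_le_maxDist P' i J'
    have hcompl (K) : hammingDist (fun t => !(P i t)) K + hammingDist (P i) K = m := by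
      simpa using hammingDist_not_add_hammingDist (P i) K
    have hcJ := hcompl J
    have hcJ' := hcompl J'
    omega

/-- MaxHam satisfies antipodal strategyproofness: for any preference extension
satisfying the standard consistency conditions, no agent gets a strictly preferred
outcome set by reporting the componentwise complement of her truthful judgment. -/
theorem maxHam_antipodal_strategyproof (m n : ℕ) (D : Finset (Fin m → Bool))
    (P : Fin n → Fin m → Bool) (i : Fin n) (hP : ∀ k, P k ∈ D)
    (hanti : (fun t => !(P i t)) ∈ D) :
    ¬ ∃ J' ∈ maxHam D (Function.update P i (fun t => !(P i t))), ∃ J ∈ maxHam D P,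
        hammingDist (P i) J' < hammingDist (P i) J ∧
        ¬ (J ∈ maxHam D (Function.update P i (fun t => !(P i t))) ∩ maxHam D P ∧
           J' ∈ maxHam D (Function.update P i (fun t => !(P i t))) ∩ maxHam D P) :=
  maxHam_antipodal_strategyproof_general m n D P i
end

section
/- If a judgment aggregation rule is strategyproof, then it satisfies neither the maximin property nor the equity property. -/
def inequity {m n : ℕ} (P : Fin n → Fin m → Bool) (J : Fin m → Bool) : ℕ :=
  Finset.univ.sup fun p : Fin n × Fin n =>
    ((hammingDist (P p.1) J : ℤ) - (hammingDist (P p.2) J : ℤ)).natAbs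

/-- Decisive-style witness of a strict set preference: `X ≻̊ Y` for some consistent
preference extension implies this condition. -/
def SetPref {m : ℕ} (Ji : Fin m → Bool) (X Y : Finset (Fin m → Bool)) : Prop :=
  ∃ J ∈ X, ∃ J' ∈ Y,
    hammingDist Ji J < hammingDist Ji J' ∧ ¬ (J ∈ X ∩ Y ∧ J' ∈ X ∩ Y)

/-- The domain `{000000, 110000, 111000, 111111}`. -/
def D6 : Finset (Fin 6 → Bool) :=
  { ![false, false, false, false, false, false],
    ![true, true, false, false, false, false],
    ![true, true, true, false, false, false],
    ![true, true, true, true, true, true] }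

/-!
Two voters with judgments `000000` and `111000` have the unique egalitarian outcome `110000`
(distances 2 and 1), whereas for `000000` and `111111` it is `111000` (distances 3 and 3), both
for the maximin and for the equity criterion. So the second voter, whose true judgment is
`111000`, moves the outcome from distance 1 to distance 0 by reporting `111111`.
-/

theorem Finset.eq_singleton_of_forall_le_of_unique {α β : Type*} [Preorder β] {f : α → β}
    {D X : Finset α} {a : α} (hne : X.Nonempty) (hXD : X ⊆ D) (hmin : ∀ x ∈ X, ∀ y ∈ D, f x ≤ f y)
    (ha : a ∈ D) (huniq : ∀ x ∈ D, f x ≤ f a → x = a) : X = {a} :=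
  hne.subset_singleton_iff.mp fun x hx =>
    Finset.mem_singleton.mpr (huniq x (hXD hx) (hmin x hx a ha))

theorem setPref_singleton {m : ℕ} {Ji J J' : Fin m → Bool}
    (h : hammingDist Ji J < hammingDist Ji J') : SetPref Ji {J} {J'} := by
  have hne : J ≠ J' := by rintro rfl; exact h.false
  refine ⟨J, Finset.mem_singleton_self J, J', Finset.mem_singleton_self J', h, ?_⟩
  simp [hne]

def J₀ : Fin 6 → Bool := ![false, false, false, false, false, false]
def J₂ : Fin 6 → Bool := ![true, true, false, false, false, false]
def J₃ : Fin 6 → Bool := ![true, true, true, false, false, false]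
def J₆ : Fin 6 → Bool := ![true, true, true, true, true, true]

def profile₀₃ : Fin 2 → Fin 6 → Bool := ![J₀, J₃]
def profile₀₆ : Fin 2 → Fin 6 → Bool := ![J₀, J₆]

theorem not_forall_minimizes_of_strategyproof
    (F : (n : ℕ) → (Fin n → Fin 6 → Bool) → Finset (Fin 6 → Bool))
    (hF : ∀ (n : ℕ) (P : Fin n → Fin 6 → Bool), (∀ k, P k ∈ D6) →
      (F n P).Nonempty ∧ F n P ⊆ D6)
    (hSP : ∀ (n : ℕ) (P P' : Fin n → Fin 6 → Bool) (i : Fin n),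
      (∀ k, P k ∈ D6) → (∀ k, P' k ∈ D6) → (∀ k, k ≠ i → P' k = P k) →
      ¬ SetPref (P i) (F n P') (F n P))
    (score : (n : ℕ) → (Fin n → Fin 6 → Bool) → (Fin 6 → Bool) → ℕ)
    (h₀₃ : ∀ J ∈ D6, score 2 profile₀₃ J ≤ score 2 profile₀₃ J₂ → J = J₂)
    (h₀₆ : ∀ J ∈ D6, score 2 profile₀₆ J ≤ score 2 profile₀₆ J₃ → J = J₃) :
    ¬ ∀ (n : ℕ) (P : Fin n → Fin 6 → Bool), (∀ k, P k ∈ D6) →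
        ∀ J ∈ F n P, ∀ K ∈ D6, score n P J ≤ score n P K := by
  intro hmin
  have hD₀₃ : ∀ k, profile₀₃ k ∈ D6 := by decide
  have hD₀₆ : ∀ k, profile₀₆ k ∈ D6 := by decide
  have hF₀₃ : F 2 profile₀₃ = {J₂} :=
    Finset.eq_singleton_of_forall_le_of_unique (hF 2 _ hD₀₃).1 (hF 2 _ hD₀₃).2
      (hmin 2 _ hD₀₃) (by decide) h₀₃
  have hF₀₆ : F 2 profile₀₆ = {J₃} :=
    Finset.eq_singleton_of_forall_le_of_unique (hF 2 _ hD₀₆).1 (hF 2 _ hD₀₆).2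
      (hmin 2 _ hD₀₆) (by decide) h₀₆
  have hmanip := hSP 2 profile₀₃ profile₀₆ 1 hD₀₃ hD₀₆ (by decide)
  rw [hF₀₃, hF₀₆] at hmanip
  exact hmanip (setPref_singleton (by decide))

/-- If a rule over the domain `D6` is strategyproof, it satisfies neither the
maximin property nor the equity property. -/
theorem strategyproof_not_egalitarian
    (F : (n : ℕ) → (Fin n → Fin 6 → Bool) → Finset (Fin 6 → Bool))
    (hF : ∀ (n : ℕ) (P : Fin n → Fin 6 → Bool), (∀ k, P k ∈ D6) →
      (F n P).Nonempty ∧ F n P ⊆ D6)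
    (hSP : ∀ (n : ℕ) (P P' : Fin n → Fin 6 → Bool) (i : Fin n),
      (∀ k, P k ∈ D6) → (∀ k, P' k ∈ D6) → (∀ k, k ≠ i → P' k = P k) →
      ¬ SetPref (P i) (F n P') (F n P)) :
    (¬ ∀ (n : ℕ) (P : Fin n → Fin 6 → Bool), (∀ k, P k ∈ D6) →
        ∀ J ∈ F n P, ∀ K ∈ D6, maxDist P J ≤ maxDist P K) ∧
    (¬ ∀ (n : ℕ) (P : Fin n → Fin 6 → Bool), (∀ k, P k ∈ D6) →
        ∀ J ∈ F n P, ∀ K ∈ D6, inequity P J ≤ inequity P K) :=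
  ⟨not_forall_minimizes_of_strategyproof F hF hSP (fun _ P J => maxDist P J)
      (by decide) (by decide),
    not_forall_minimizes_of_strategyproof F hF hSP (fun _ P J => inequity P J)
      (by decide) (by decide)⟩
end
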